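/- Let G be a Gauss diagram that can be transformed by a finite sequence of crossing changes into a Gauss diagram G' whose writhe polynomial vanishes, W_{G'}(t) = 0. Then the writhe polynomial of G is reciprocal: J_k(G) = J_{−k}(G) for every nonzero integer k. -/

import Mathlib

open scoped Classical

/-- A Gauss diagram with `n` chords: the `2n` marked points live on the cyclic group
`ZMod (2*n)` (the oriented circle); each chord `i` is the ordered pair
`(tail i, head i)` of marked points and carries a sign (writhe) `sign i ∈ {+1, -1}`;
all `2n` endpoints are distinct. -/
structure GaussDiagram (n : ℕ) where
  tail : Fin n → ZMod (2 * n)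
  head : Fin n → ZMod (2 * n)
  sign : Fin n → ℤ
  sign_mem : ∀ i, sign i = 1 ∨ sign i = -1
  endpoints_inj : Function.Injective
    (fun p : Fin n × Bool => if p.2 then head p.1 else tail p.1)

namespace GaussDiagram

variable {n : ℕ}

/-- `x` lies on the open arc running in the circle's orientation from `a` to `b`. -/
def arcMem (a b x : ZMod (2 * n)) : Prop :=
  0 < (x - a).val ∧ (x - a).val < (b - a).val

/-- `x` lies on the open oriented arc from the tail to the head of chord `i`. -/
def inArc (G : GaussDiagram n) (i : Fin n) (x : ZMod (2 * n)) : Prop :=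
  arcMem (G.tail i) (G.head i) x

/-- Chords `i` and `j` are linked: exactly one endpoint of `j` lies on the open
oriented arc from the tail to the head of `i`. -/
def linked (G : GaussDiagram n) (i j : Fin n) : Prop :=
  Xor' (G.inArc i (G.tail j)) (G.inArc i (G.head j))

/-- Chord `j` crosses chord `i` from right to left. -/
def crossesRL (G : GaussDiagram n) (i j : Fin n) : Prop :=
  G.linked i j ∧ G.inArc i (G.head j)

/-- Chord `j` crosses chord `i` from left to right. -/
def crossesLR (G : GaussDiagram n) (i j : Fin n) : Prop :=
  G.linked i j ∧ G.inArc i (G.tail j)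

/-- The index of the chord `i`: `Ind(i) = r₊ − r₋ − l₊ + l₋`. -/
noncomputable def ind (G : GaussDiagram n) (i : Fin n) : ℤ :=
  ((Finset.univ.filter fun j => G.crossesRL i j ∧ G.sign j = 1).card : ℤ)
    - ((Finset.univ.filter fun j => G.crossesRL i j ∧ G.sign j = -1).card : ℤ)
    - ((Finset.univ.filter fun j => G.crossesLR i j ∧ G.sign j = 1).card : ℤ)
    + ((Finset.univ.filter fun j => G.crossesLR i j ∧ G.sign j = -1).card : ℤ)

/-- The `k`-th writhe `J_k(G)`: the number of positive chords of index `k` minus the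
number of negative chords of index `k`. -/
noncomputable def J (G : GaussDiagram n) (k : ℤ) : ℤ :=
  ((Finset.univ.filter fun i => G.ind i = k ∧ G.sign i = 1).card : ℤ)
    - ((Finset.univ.filter fun i => G.ind i = k ∧ G.sign i = -1).card : ℤ)

/-- The writhe polynomial `W_G(t) = ∑_{Ind(c) ≠ 0} w(c) t^{Ind(c)} = ∑_{k ≠ 0} J_k(G) t^k`. -/
noncomputable def writhePoly (G : GaussDiagram n) : LaurentPolynomial ℤ :=
  ∑ i ∈ Finset.univ.filter (fun i => G.ind i ≠ 0),
    LaurentPolynomial.C (G.sign i) * LaurentPolynomial.T (G.ind i)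

/-- The odd writhe `J(G) = ∑_{c ∈ Odd(G)} w(c)`. -/
noncomputable def oddWrithe (G : GaussDiagram n) : ℤ :=
  ∑ i ∈ Finset.univ.filter (fun i => Odd (G.ind i)), G.sign i

/-- `G'` is obtained from `G` by a crossing change at the chord `c`: the tail and head
of `c` are interchanged and its sign is negated, all other chords being unchanged. -/
def IsCrossingChangeAt (G G' : GaussDiagram n) (c : Fin n) : Prop :=
  G'.tail c = G.head c ∧ G'.head c = G.tail c ∧ G'.sign c = -G.sign c ∧
    ∀ j : Fin n, j ≠ c →
      G'.tail j = G.tail j ∧ G'.head j = G.head j ∧ G'.sign j = G.sign j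

/-- `G'` is obtained from `G` by a crossing change (at some chord). -/
def IsCrossingChange (G G' : GaussDiagram n) : Prop :=
  ∃ c, IsCrossingChangeAt G G' c

/-- `G'` is obtained from `G` by a sequence of `m` crossing changes. -/
def ChangedBy (m : ℕ) (G G' : GaussDiagram n) : Prop :=
  ∃ f : ℕ → GaussDiagram n, f 0 = G ∧ f m = G' ∧
    ∀ i < m, IsCrossingChange (f i) (f (i + 1))

end GaussDiagram

/-!
A crossing change at `c` reverses `c` and negates its sign. Every other chord then sees `c`
cross it in the opposite direction but with the opposite sign, so its index is unchanged, while
`c` sees every other chord cross it in the opposite direction, so `Ind(c)` changes sign. Hence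
each chord's contribution `w(c) (t^Ind(c) - t^(-Ind(c)))` to `W_G(t) - W_G(t⁻¹)` is unchanged,
i.e. `J_k - J_{-k}` is invariant under crossing changes; it vanishes when `W = 0`.
-/

namespace GaussDiagram

variable {n : ℕ}

lemma arcMem_swap_iff (hn : 0 < n) {a b x : ZMod (2 * n)} (hab : a ≠ b) (hxa : x ≠ a)
    (hxb : x ≠ b) : arcMem b a x ↔ ¬ arcMem a b x := by
  have : NeZero (2 * n) := ⟨by omega⟩
  have : NeZero (b - a) := ⟨sub_ne_zero.mpr hab.symm⟩
  have hu : (x - a).val ≠ 0 := by rwa [Ne, ZMod.val_eq_zero, sub_eq_zero]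
  have huv : (x - a).val ≠ (b - a).val := fun h => hxb (sub_left_inj.mp (ZMod.val_injective _ h))
  have hba : (a - b).val = 2 * n - (b - a).val := by rw [← neg_sub, ZMod.val_neg_of_ne_zero]
  have hbounds := And.intro (ZMod.val_lt (x - a)) (ZMod.val_lt (b - a))
  have hsplit : x - b = (x - a) + (a - b) := by ring
  unfold arcMem
  rcases lt_or_ge ((x - a).val + (a - b).val) (2 * n) with h | h
  · rw [hsplit, ZMod.val_add_of_lt h]
    omega
  · have := ZMod.val_add_val_of_le h
    rw [hsplit]
    omega

lemma tail_ne_head (G : GaussDiagram n) (i j : Fin n) : G.tail i ≠ G.head j := fun h => by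
  simpa using G.endpoints_inj (a₁ := (i, false)) (a₂ := (j, true)) (by simpa using h)

lemma tail_injective (G : GaussDiagram n) : Function.Injective G.tail := fun i j h => by
  simpa using G.endpoints_inj (a₁ := (i, false)) (a₂ := (j, false)) (by simpa using h)

lemma head_injective (G : GaussDiagram n) : Function.Injective G.head := fun i j h => by
  simpa using G.endpoints_inj (a₁ := (i, true)) (a₂ := (j, true)) (by simpa using h)

lemma not_inArc_tail (G : GaussDiagram n) (i : Fin n) : ¬ G.inArc i (G.tail i) := by
  simp [inArc, arcMem]

lemma not_inArc_head (G : GaussDiagram n) (i : Fin n) : ¬ G.inArc i (G.head i) := by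
  simp [inArc, arcMem]

lemma crossesRL_iff (G : GaussDiagram n) (i j : Fin n) :
    G.crossesRL i j ↔ G.inArc i (G.head j) ∧ ¬ G.inArc i (G.tail j) := by
  change Xor _ _ ∧ _ ↔ _
  rw [xor_def]
  tauto

lemma crossesLR_iff (G : GaussDiagram n) (i j : Fin n) :
    G.crossesLR i j ↔ G.inArc i (G.tail j) ∧ ¬ G.inArc i (G.head j) := by
  change Xor _ _ ∧ _ ↔ _
  rw [xor_def]
  tauto

lemma card_filter_sign_sub (G : GaussDiagram n) (p : Fin n → Prop) [DecidablePred p] :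
    ((Finset.univ.filter fun i => p i ∧ G.sign i = 1).card : ℤ)
      - ((Finset.univ.filter fun i => p i ∧ G.sign i = -1).card : ℤ)
      = ∑ i, if p i then G.sign i else 0 := by
  simp only [Finset.card_filter, Nat.cast_sum, Nat.cast_ite, Nat.cast_one, Nat.cast_zero,
    ← Finset.sum_sub_distrib]
  refine Finset.sum_congr rfl fun i _ => ?_
  rcases G.sign_mem i with h | h <;> by_cases hp : p i <;> simp [h, hp]

/-- `crossing i j` is `1` if `j` crosses `i` from right to left, `-1` if from left to right,
and `0` otherwise. -/
noncomputable def crossing (G : GaussDiagram n) (i j : Fin n) : ℤ :=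
  (if G.inArc i (G.head j) then 1 else 0) - (if G.inArc i (G.tail j) then 1 else 0)

lemma crossing_self (G : GaussDiagram n) (i : Fin n) : G.crossing i i = 0 := by
  simp [crossing, not_inArc_head, not_inArc_tail]

lemma ind_eq_sum (G : GaussDiagram n) (i : Fin n) :
    G.ind i = ∑ j, G.sign j * G.crossing i j := by
  calc G.ind i = (∑ j, if G.crossesRL i j then G.sign j else 0)
        - ∑ j, if G.crossesLR i j then G.sign j else 0 := by
        rw [ind, ← card_filter_sign_sub, ← card_filter_sign_sub]
        ring
    _ = ∑ j, G.sign j * G.crossing i j := by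
      rw [← Finset.sum_sub_distrib]
      refine Finset.sum_congr rfl fun j _ => ?_
      by_cases hh : G.inArc i (G.head j) <;> by_cases ht : G.inArc i (G.tail j) <;>
        simp [crossesRL_iff, crossesLR_iff, crossing, hh, ht]

lemma J_eq_sum (G : GaussDiagram n) (k : ℤ) :
    G.J k = ∑ i, if G.ind i = k then G.sign i else 0 :=
  G.card_filter_sign_sub (G.ind · = k)

lemma writhePoly_coeff (G : GaussDiagram n) {k : ℤ} (hk : k ≠ 0) :
    G.writhePoly.coeff k = G.J k := by
  simp_rw [writhePoly, ← LaurentPolynomial.single_eq_C_mul_T, AddMonoidAlgebra.coeff_sum,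
    Finsupp.finsetSum_apply, AddMonoidAlgebra.coeff_single, Finsupp.single_apply]
  rw [J_eq_sum, Finset.sum_filter]
  refine Finset.sum_congr rfl fun i _ => ?_
  by_cases hi : G.ind i = k <;> simp [hi, hk]

namespace IsCrossingChangeAt

variable {G G' : GaussDiagram n} {c : Fin n}

lemma inArc_of_ne (hcc : G.IsCrossingChangeAt G' c) {j : Fin n} (hj : j ≠ c) :
    G'.inArc j = G.inArc j := by
  obtain ⟨htail, hhead, -⟩ := hcc.2.2.2 j hj
  funext x
  rw [inArc, inArc, htail, hhead]

lemma inArc_self_iff (hcc : G.IsCrossingChangeAt G' c) {x : ZMod (2 * n)}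
    (hxt : x ≠ G.tail c) (hxh : x ≠ G.head c) : G'.inArc c x ↔ ¬ G.inArc c x := by
  rw [inArc, inArc, hcc.1, hcc.2.1]
  exact arcMem_swap_iff c.pos (G.tail_ne_head c c) hxt hxh

lemma crossing_of_ne (hcc : G.IsCrossingChangeAt G' c) {j k : Fin n} (hj : j ≠ c) (hk : k ≠ c) :
    G'.crossing j k = G.crossing j k := by
  obtain ⟨htail, hhead, -⟩ := hcc.2.2.2 k hk
  rw [crossing, crossing, hcc.inArc_of_ne hj, htail, hhead]

lemma crossing_self_left (hcc : G.IsCrossingChangeAt G' c) {k : Fin n} (hk : k ≠ c) :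
    G'.crossing c k = -G.crossing c k := by
  obtain ⟨htail, hhead, -⟩ := hcc.2.2.2 k hk
  have hh := hcc.inArc_self_iff (x := G.head k) (fun h => G.tail_ne_head c k h.symm)
    (fun h => hk (G.head_injective h))
  have ht := hcc.inArc_self_iff (x := G.tail k) (fun h => hk (G.tail_injective h))
    (G.tail_ne_head k c)
  rw [crossing, crossing, htail, hhead]
  by_cases h₁ : G.inArc c (G.head k) <;> by_cases h₂ : G.inArc c (G.tail k) <;>
    simp [hh, ht, h₁, h₂]

lemma crossing_self_right (hcc : G.IsCrossingChangeAt G' c) {j : Fin n} (hj : j ≠ c) :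
    G'.crossing j c = -G.crossing j c := by
  rw [crossing, crossing, hcc.inArc_of_ne hj, hcc.1, hcc.2.1]
  ring

lemma ind_of_ne (hcc : G.IsCrossingChangeAt G' c) {j : Fin n} (hj : j ≠ c) :
    G'.ind j = G.ind j := by
  rw [ind_eq_sum, ind_eq_sum]
  refine Finset.sum_congr rfl fun k _ => ?_
  have ⟨_, _, hsign, hother⟩ := hcc
  by_cases hk : k = c
  · rw [hk, hsign, hcc.crossing_self_right hj]
    ring
  · rw [(hother k hk).2.2, hcc.crossing_of_ne hj hk]

lemma ind_self (hcc : G.IsCrossingChangeAt G' c) : G'.ind c = -G.ind c := by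
  rw [ind_eq_sum, ind_eq_sum, ← Finset.sum_neg_distrib]
  refine Finset.sum_congr rfl fun k _ => ?_
  have ⟨_, _, _, hother⟩ := hcc
  by_cases hk : k = c
  · simp [hk, crossing_self]
  · rw [(hother k hk).2.2, hcc.crossing_self_left hk]
    ring

lemma J_sub_J_neg (hcc : G.IsCrossingChangeAt G' c) (k : ℤ) :
    G'.J k - G'.J (-k) = G.J k - G.J (-k) := by
  simp only [J_eq_sum, ← Finset.sum_sub_distrib]
  refine Finset.sum_congr rfl fun i _ => ?_
  have ⟨_, _, hsign, hother⟩ := hcc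
  by_cases hi : i = c
  · rw [hi, hcc.ind_self, hsign]
    split_ifs <;> omega
  · rw [hcc.ind_of_ne hi, (hother i hi).2.2]

end IsCrossingChangeAt

lemma ChangedBy.apply_eq_of_invariant {α : Type*} {m : ℕ} {G G' : GaussDiagram n}
    (h : ChangedBy m G G') (φ : GaussDiagram n → α)
    (hφ : ∀ H H', IsCrossingChange H H' → φ H' = φ H) : φ G' = φ G := by
  obtain ⟨f, rfl, rfl, hf⟩ := h
  suffices ∀ i ≤ m, φ (f i) = φ (f 0) from this m le_rfl
  intro i
  induction i with
  | zero => exact fun _ => rfl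
  | succ i ih => exact fun hi => (hφ _ _ (hf i hi)).trans (ih (by omega))

end GaussDiagram

/-- if `G` can be transformed by a finite sequence of crossing changes into a
Gauss diagram `G'` with `W_{G'}(t) = 0`, then the writhe polynomial of `G` is reciprocal:
`J_k(G) = J_{−k}(G)` for every nonzero integer `k`. -/
theorem writhePoly_reciprocal_of_unknottable_by_crossingChanges {n : ℕ}
    (G G' : GaussDiagram n) (h : ∃ m : ℕ, GaussDiagram.ChangedBy m G G')
    (h0 : G'.writhePoly = 0) :
    ∀ k : ℤ, k ≠ 0 → G.J k = G.J (-k) := by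
  intro k hk
  obtain ⟨m, hm⟩ := h
  have hJ' : ∀ l ≠ 0, G'.J l = 0 := fun l hl => by
    simp [← G'.writhePoly_coeff hl, h0]
  have hinv : G'.J k - G'.J (-k) = G.J k - G.J (-k) :=
    hm.apply_eq_of_invariant (fun H => H.J k - H.J (-k)) fun _ _ ⟨_, hcc⟩ => hcc.J_sub_J_neg k
  rw [hJ' k hk, hJ' (-k) (neg_ne_zero.mpr hk)] at hinv
  omega
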